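/- For the set disjointness problem f with parameters m ≤ n < N/2 and any integer u with n ≤ u ≤ N: if A ⊆ X and B ⊆ Y satisfy f(x,y) = 1 for all (x,y) ∈ A × B and |B| ≥ binom(u,n), then |A| ≤ binom(N−u, m). -/

import Mathlib

/-- `f` has `(s,w,t)`-certificates: there is a code `T : Y → Σ^s` with alphabet
`Σ = {0,1}^w` such that for every query `x` and database `y` some set `P` of at
most `t` cells determines the answer `f (x, y)`. -/
def HasCertificates {X Y Z : Type*} (f : X × Y → Z) (s w t : ℕ) : Prop :=
  ∃ T : Y → Fin s → (Fin w → Bool),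
    ∀ x : X, ∀ y : Y, ∃ P : Finset (Fin s), P.card ≤ t ∧
      ∀ y' : Y, (∀ i ∈ P, T y' i = T y i) → f (x, y') = f (x, y)

/-- The set disjointness problem on universe `{1,…,N}` with parameters `m, n`: queries are
`m`-element subsets, databases are `n`-element subsets, and the answer is `1` iff the two
sets are disjoint. -/
def setDisj (N m n : ℕ) :
    {x : Finset (Fin N) // x.card = m} × {y : Finset (Fin N) // y.card = n} → Fin 2 :=
  fun p => if Disjoint p.1.val p.2.val then 1 else 0

/-!
All sets of a 1-rectangle `A × B` in set disjointness avoid the union `U` of the sets in `B`.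
Since `B` consists of `n`-subsets of `U`, `C(u, n) ≤ |B| ≤ C(|U|, n)` forces `u ≤ |U|`, and `A`
consists of `m`-subsets of the complement of `U`, so `|A| ≤ C(N - |U|, m) ≤ C(N - u, m)`.
The step `u ≤ |U|` needs `n > 0`; for `n = 0` also `m = 0` and the bound is `|A| ≤ 1`.
-/

namespace Nat

theorem choose_lt_choose_of_lt {a b k : ℕ} (hk : 0 < k) (hka : k ≤ a) (hab : a < b) :
    a.choose k < b.choose k := by
  obtain ⟨j, rfl⟩ : ∃ j, k = j + 1 := ⟨k - 1, by omega⟩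
  calc a.choose (j + 1) < a.choose j + a.choose (j + 1) :=
        Nat.lt_add_of_pos_left (Nat.choose_pos (by omega))
    _ = (a + 1).choose (j + 1) := (Nat.choose_succ_succ a j).symm
    _ ≤ b.choose (j + 1) := Nat.choose_le_choose _ hab

theorem le_of_choose_le_choose {a b k : ℕ} (hk : 0 < k) (hka : k ≤ a)
    (h : a.choose k ≤ b.choose k) : a ≤ b := by
  by_contra! hba
  rcases le_or_gt k b with hkb | hbk
  · exact (choose_lt_choose_of_lt hk hkb hba).not_ge h
  · exact (Nat.choose_pos hka).not_ge (h.trans (Nat.choose_eq_zero_of_lt hbk).le)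

end Nat

theorem Finset.card_le_choose_of_forall_subset {α : Type*} {r : ℕ} {U : Finset α}
    (S : Finset {s : Finset α // s.card = r}) (hS : ∀ s ∈ S, s.1 ⊆ U) :
    S.card ≤ U.card.choose r :=
  calc S.card = (S.map (Function.Embedding.subtype _)).card := (Finset.card_map _).symm
    _ ≤ (U.powersetCard r).card := Finset.card_le_card fun _ ht => by
        obtain ⟨s, hs, rfl⟩ := Finset.mem_map.1 ht
        exact Finset.mem_powersetCard.2 ⟨hS s hs, s.2⟩
    _ = U.card.choose r := Finset.card_powersetCard r U

theorem setDisj_eq_one_iff {N m n : ℕ} {x : {x : Finset (Fin N) // x.card = m}}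
    {y : {y : Finset (Fin N) // y.card = n}} : setDisj N m n (x, y) = 1 ↔ Disjoint x.1 y.1 := by
  unfold setDisj
  split_ifs with h <;> simp [h]

theorem setDisj_rectangle_bound_general (N m n u : ℕ) (hmn : m ≤ n)
    (hnu : n ≤ u)
    (A : Finset {x : Finset (Fin N) // x.card = m})
    (B : Finset {y : Finset (Fin N) // y.card = n})
    (hone : ∀ x ∈ A, ∀ y ∈ B, setDisj N m n (x, y) = 1)
    (hB : u.choose n ≤ B.card) :
    A.card ≤ (N - u).choose m := by
  set U := B.sup Subtype.val
  have hBU : B.card ≤ U.card.choose n :=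
    Finset.card_le_choose_of_forall_subset B fun _ hy => Finset.le_sup hy
  have hA : A.card ≤ (N - U.card).choose m := by
    have hAU : ∀ x ∈ A, x.1 ⊆ Uᶜ := fun x hx =>
      Finset.subset_compl_iff_disjoint_right.2 <| Finset.disjoint_sup_right.2 fun y hy =>
        setDisj_eq_one_iff.1 (hone x hx y hy)
    simpa [Finset.card_compl] using Finset.card_le_choose_of_forall_subset A hAU
  rcases m.eq_zero_or_pos with rfl | hm
  · simpa using hA
  · have huU : u ≤ U.card := Nat.le_of_choose_le_choose (by omega) hnu (hB.trans hBU)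
    exact hA.trans (Nat.choose_le_choose m (by omega))

/-- For set disjointness with `m ≤ n < N/2` and any `n ≤ u ≤ N`: any monochromatic
1-rectangle `A × B` with `|B| ≥ C(u,n)` has `|A| ≤ C(N−u, m)`. -/
theorem setDisj_rectangle_bound (N m n u : ℕ) (hmn : m ≤ n) (hnN : 2 * n < N)
    (hnu : n ≤ u) (huN : u ≤ N)
    (A : Finset {x : Finset (Fin N) // x.card = m})
    (B : Finset {y : Finset (Fin N) // y.card = n})
    (hone : ∀ x ∈ A, ∀ y ∈ B, setDisj N m n (x, y) = 1)
    (hB : u.choose n ≤ B.card) :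
    A.card ≤ (N - u).choose m :=
  setDisj_rectangle_bound_general N m n u hmn hnu A B hone hB
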